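/- Let F be a finite field, H ⊆ F^n a linear code, f : H → F a quadratic function with f(0) = 0. For each codeword w = ((w_α)_{α∈F}, p) ∈ C(H,f), let c = ∑_{α∈F} w_α and define Φ_w(v) = w + Π^c(v). Then Φ_w maps C(H,f) onto C(H,f) and Φ_w(0) = w; hence C(H,f) is a transitive code. -/

import Mathlib

/-!
Write `Φ_w v = w + Π^c v`. Translating the blocks of `v` by `β^c_j` in coordinate `j` does not
change the block sum `d = ∑ α, v_α`, and lowers the weight `∑ α, α |v_α|` by exactly
`⟨β^c, d⟩`. On the other hand `p(X + c) - p(X)` has degree at most one when `p` is quadratic, so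
`f (c + d) = f c + f d + ⟨β^c, d⟩` on `H`, and the two cross terms cancel. Hence, for `w` in the
code, `Φ_w v` is a codeword iff `v` is, and since `Φ_w` is a bijection it maps the code onto
itself.
-/

open Finset

/-- The Vasil'ev–Schönheim code built from a subspace `H ⊆ F^n` and `f : H → F`. -/
def VScode {F : Type*} [Field F] [Fintype F] {n : ℕ}
    (H : Submodule F (Fin n → F)) (f : H → F) :
    Set ((F → (Fin n → F)) × F) :=
  {x | ∃ hc : (∑ α, x.1 α) ∈ H,
    x.2 = (∑ α : F, α * (∑ j, x.1 α j)) + f ⟨∑ α, x.1 α, hc⟩}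

/-- The coefficient of `X i` in `p(X + c) - p(X)`. -/
noncomputable def linCoeff {F : Type*} [Field F] {n : ℕ}
    (p : MvPolynomial (Fin n) F) (c : Fin n → F) (i : Fin n) : F :=
  MvPolynomial.coeff (Finsupp.single i 1)
    ((MvPolynomial.bind₁ (fun j => MvPolynomial.X j + MvPolynomial.C (c j)) p) - p)

/-- `Π^c`: position `j` of block `α` receives the entry of block `α + β_j^c`. -/
def PiVec {F : Type*} [Field F] {n : ℕ} (b : Fin n → F)
    (x : (F → (Fin n → F)) × F) : (F → (Fin n → F)) × F :=
  (fun α i => x.1 (α + b i) i, x.2)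

theorem Finsupp.prod_pow_eq_prod_map_toMultiset {σ M : Type*} [CommMonoid M] (d : σ →₀ ℕ)
    (f : σ → M) : ∏ i ∈ d.support, f i ^ d i = (d.toMultiset.map f).prod := by
  classical
  rw [Finset.prod_multiset_map_count, Finsupp.toFinset_toMultiset]
  simp only [Finsupp.count_toMultiset]

namespace MvPolynomial

variable {R σ : Type*} [CommRing R]

theorem totalDegree_X_le (i : σ) : (X i : MvPolynomial σ R).totalDegree ≤ 1 :=
  (totalDegree_monomial_le _ _).trans (by simp)

theorem totalDegree_prod_X_add_C_sub_prod_X_le (c : σ → R) (s : Multiset σ) :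
    ((s.map fun i => X i + C (c i)).prod - (s.map X).prod : MvPolynomial σ R).totalDegree
      ≤ Multiset.card s - 1 := by
  induction s using Multiset.induction with
  | empty => simp
  | cons i t ih =>
    by_cases ht : t = 0
    · subst ht
      simp
    set P := (t.map fun i => X i + C (c i)).prod
    have hP : P.totalDegree ≤ Multiset.card t := by
      refine (totalDegree_multiset_prod _).trans ?_
      rw [Multiset.map_map]
      refine (Multiset.sum_le_card_nsmul _ 1 ?_).trans (by simp)
      simp only [Multiset.mem_map, Function.comp_apply]
      rintro _ ⟨j, -, rfl⟩
      exact (totalDegree_add _ _).trans (by simpa using totalDegree_X_le j)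
    have hsplit : (X i + C (c i)) * P - X i * (t.map X).prod
        = X i * (P - (t.map X).prod) + C (c i) * P := by ring
    have hcard := Multiset.card_pos.2 ht
    rw [Multiset.map_cons, Multiset.map_cons, Multiset.prod_cons, Multiset.prod_cons, hsplit,
      Multiset.card_cons]
    refine (totalDegree_add _ _).trans (max_le ?_ ?_)
    · have := totalDegree_X_le (R := R) i
      exact (totalDegree_mul _ _).trans (by omega)
    · exact (totalDegree_mul _ _).trans (by rw [totalDegree_C]; omega)

theorem totalDegree_bind₁_X_add_C_sub_le (c : σ → R) (p : MvPolynomial σ R) :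
    (bind₁ (fun i => X i + C (c i)) p - p).totalDegree ≤ p.totalDegree - 1 := by
  conv_lhs => rw [p.as_sum, map_sum, ← Finset.sum_sub_distrib]
  refine (totalDegree_finsetSum _ _).trans (Finset.sup_le fun d hd => ?_)
  have hd : Multiset.card d.toMultiset ≤ p.totalDegree := by
    rw [Finsupp.card_toMultiset]
    exact le_totalDegree hd
  rw [bind₁_monomial, monomial_eq, Finsupp.prod, Finsupp.prod_pow_eq_prod_map_toMultiset,
    Finsupp.prod_pow_eq_prod_map_toMultiset, ← mul_sub]
  refine (totalDegree_mul _ _).trans ?_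
  have := totalDegree_prod_X_add_C_sub_prod_X_le c d.toMultiset
  rw [totalDegree_C]
  omega

theorem eval_bind₁_X_add_C (c x : σ → R) (p : MvPolynomial σ R) :
    eval x (bind₁ (fun i => X i + C (c i)) p) = eval (c + x) p := by
  rw [show eval x = eval₂Hom (RingHom.id R) x from rfl, eval₂Hom_bind₁]
  congr 2
  ext i
  simp [add_comm]

theorem eq_C_add_sum_monomial_of_totalDegree_le_one [Fintype σ] {q : MvPolynomial σ R}
    (hq : q.totalDegree ≤ 1) :
    q = C (coeff 0 q) + ∑ i, monomial (Finsupp.single i 1) (coeff (Finsupp.single i 1) q) := by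
  classical
  ext d
  simp only [coeff_add, coeff_C, coeff_sum, coeff_monomial]
  rcases hd : d.degree with _ | _ | k
  · obtain rfl := (Finsupp.degree_eq_zero_iff d).1 hd
    simp
  · obtain ⟨j, rfl⟩ := (Finsupp.sum_eq_one_iff d).1 hd
    simp [Finsupp.single_left_inj, eq_comm (a := (0 : σ →₀ ℕ))]
  · have hlt : q.totalDegree < d.degree := by omega
    rw [coeff_eq_zero_of_totalDegree_lt hlt]
    have h0 : (0 : σ →₀ ℕ) ≠ d := by rintro rfl; simp at hd
    have h1 : ∀ i, Finsupp.single i 1 ≠ d := by rintro i rfl; simp at hd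
    simp [h0, h1]

theorem eval_eq_of_totalDegree_le_one [Fintype σ] {q : MvPolynomial σ R}
    (hq : q.totalDegree ≤ 1) (x : σ → R) :
    eval x q = coeff 0 q + ∑ i, coeff (Finsupp.single i 1) q * x i := by
  conv_lhs => rw [eq_C_add_sum_monomial_of_totalDegree_le_one hq]
  simp [eval_monomial]

end MvPolynomial

open MvPolynomial in
theorem eval_add_eq_of_totalDegree_le_two {F : Type*} [Field F] {n : ℕ}
    {p : MvPolynomial (Fin n) F} (hp : p.totalDegree ≤ 2) (c d : Fin n → F) :
    eval (c + d) p = eval c p + eval d p - eval 0 p + ∑ j, linCoeff p c j * d j := by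
  set q := bind₁ (fun j => X j + C (c j)) p - p
  have hq : q.totalDegree ≤ 1 := (totalDegree_bind₁_X_add_C_sub_le c p).trans (by omega)
  have hshift (y : Fin n → F) : eval (c + y) p = eval y p + eval y q := by
    rw [map_sub, eval_bind₁_X_add_C]
    ring
  have hc : eval c p = eval 0 p + eval 0 q := by simpa using hshift 0
  rw [hshift, hc, eval_eq_of_totalDegree_le_one hq d, eval_eq_of_totalDegree_le_one hq 0]
  simp only [linCoeff, q, Pi.zero_apply, mul_zero, Finset.sum_const_zero]
  ring

section PiVec

variable {F : Type*} [Field F] {n : ℕ}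

@[simp]
theorem snd_piVec (b : Fin n → F) (x : (F → Fin n → F) × F) : (PiVec b x).2 = x.2 := rfl

theorem piVec_zero (b : Fin n → F) : PiVec b (0 : (F → Fin n → F) × F) = 0 := rfl

theorem piVec_piVec (b b' : Fin n → F) (x : (F → Fin n → F) × F) :
    PiVec b (PiVec b' x) = PiVec (b + b') x := by
  simp only [PiVec, Pi.add_apply, add_assoc]

theorem piVec_surjective (b : Fin n → F) : Function.Surjective (PiVec (F := F) b) :=
  fun x => ⟨PiVec (-b) x, by rw [piVec_piVec, add_neg_cancel]; simp [PiVec]⟩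

end PiVec

namespace VScode

variable {F : Type*} [Field F] [Fintype F] {n : ℕ}

def blockSum (x : (F → Fin n → F) × F) : Fin n → F := ∑ α, x.1 α

def weight (x : (F → Fin n → F) × F) : F := ∑ α, α * ∑ j, x.1 α j

theorem mem_iff {H : Submodule F (Fin n → F)} {g : (Fin n → F) → F}
    {x : (F → Fin n → F) × F} :
    x ∈ VScode H (fun y => g y) ↔ blockSum x ∈ H ∧ x.2 = weight x + g (blockSum x) := by
  simp only [VScode, Set.mem_ofPred_eq, exists_prop]
  rfl

theorem blockSum_add (x y : (F → Fin n → F) × F) :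
    blockSum (x + y) = blockSum x + blockSum y :=
  Finset.sum_add_distrib

theorem weight_add (x y : (F → Fin n → F) × F) : weight (x + y) = weight x + weight y := by
  simp only [weight, Prod.fst_add, Pi.add_apply, Finset.sum_add_distrib, mul_add]

theorem blockSum_piVec (b : Fin n → F) (x : (F → Fin n → F) × F) :
    blockSum (PiVec b x) = blockSum x := by
  ext j
  simp only [blockSum, PiVec, Finset.sum_apply]
  exact Equiv.sum_comp (Equiv.addRight (b j)) (fun α => x.1 α j)

theorem weight_piVec (b : Fin n → F) (x : (F → Fin n → F) × F) :
    weight (PiVec b x) = weight x - ∑ j, b j * blockSum x j := by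
  have hshift (j : Fin n) :
      ∑ α, α * x.1 (α + b j) j = ∑ α, α * x.1 α j - b j * ∑ α, x.1 α j := by
    rw [← Equiv.sum_comp (Equiv.addRight (-b j)) (fun α => α * x.1 (α + b j) j)]
    simp [neg_add_cancel_right, add_mul, Finset.sum_add_distrib, Finset.mul_sum, sub_eq_add_neg]
  calc weight (PiVec b x) = ∑ j, ∑ α, α * x.1 (α + b j) j := by
        simp only [weight, PiVec, Finset.mul_sum]
        exact Finset.sum_comm
    _ = ∑ j, (∑ α, α * x.1 α j - b j * ∑ α, x.1 α j) := Finset.sum_congr rfl fun j _ => hshift j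
    _ = weight x - ∑ j, b j * blockSum x j := by
        simp only [weight, blockSum, Finset.sum_sub_distrib, Finset.sum_apply, Finset.mul_sum]
        rw [Finset.sum_comm]

variable {H : Submodule F (Fin n → F)} {g : (Fin n → F) → F} {b : Fin n → F}
  {w : (F → Fin n → F) × F}

theorem add_piVec_mem_iff (hw : w ∈ VScode H (fun y => g y))
    (hg : ∀ d ∈ H, g (blockSum w + d) = g (blockSum w) + g d + ∑ j, b j * d j)
    {v : (F → Fin n → F) × F} :
    w + PiVec b v ∈ VScode H (fun y => g y) ↔ v ∈ VScode H (fun y => g y) := by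
  obtain ⟨hc, hw⟩ := mem_iff.1 hw
  rw [mem_iff, mem_iff, blockSum_add, blockSum_piVec, weight_add, weight_piVec,
    H.add_mem_iff_right hc]
  refine and_congr_right fun hd => ?_
  rw [hg _ hd, Prod.snd_add, snd_piVec, hw]
  constructor <;> intro h <;> linear_combination h

theorem image_add_piVec (hw : w ∈ VScode H (fun y => g y))
    (hg : ∀ d ∈ H, g (blockSum w + d) = g (blockSum w) + g d + ∑ j, b j * d j) :
    (fun v => w + PiVec b v) '' VScode H (fun y => g y) = VScode H (fun y => g y) := by
  have hsurj : Function.Surjective fun v => w + PiVec b v :=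
    (add_left_surjective w).comp (piVec_surjective b)
  conv_rhs => rw [← Set.image_preimage_eq (VScode H fun y => g y) hsurj]
  congr 1
  ext v
  exact (add_piVec_mem_iff hw hg).symm

end VScode

/-- For `H` linear and `f` quadratic with `f 0 = 0`, each map
`Φ_w : v ↦ w + Π^c(v)` (with `c = ∑_α w_α`) maps `C(H,f)` onto itself and sends
`0` to `w`; hence `C(H,f)` is a transitive code. -/
theorem stmt9 {F : Type*} [Field F] [Fintype F] {n : ℕ}
    (H : Submodule F (Fin n → F)) (f : H → F)
    (p : MvPolynomial (Fin n) F) (hp : p.totalDegree ≤ 2)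
    (hf : ∀ x : H, f x = MvPolynomial.eval (x : Fin n → F) p)
    (hf0 : f 0 = 0) :
    ∀ w ∈ VScode H f,
      (fun v => w + PiVec (linCoeff p (∑ α, w.1 α)) v) '' VScode H f
        = VScode H f ∧
      w + PiVec (linCoeff p (∑ α, w.1 α)) 0 = w := by
  intro w hw
  obtain rfl : f = fun x : H => MvPolynomial.eval (x : Fin n → F) p := funext hf
  have h0 : MvPolynomial.eval 0 p = 0 := hf0
  refine ⟨VScode.image_add_piVec (g := fun x => MvPolynomial.eval x p) hw fun d _ => ?_,
    by rw [piVec_zero, add_zero]⟩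
  rw [eval_add_eq_of_totalDegree_le_two hp, h0, sub_zero]
  rfl
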